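/- arXiv:1111.0460 — 2 statements merged into one kernel-verified Lean document; each statement's English description precedes it below -/
import Mathlib

section
/- Let B be a quasi-greedy basis with quasi-greedy constant K in a real Banach space X. Then for every finite set Γ of indices and every family of real numbers (a_k)_{k∈Γ}, one has (1/(4K²))·(min_{k∈Γ}|a_k|)·‖Σ_{k∈Γ} e_k‖ ≤ ‖Σ_{k∈Γ} a_k e_k‖ ≤ 2K·(max_{k∈Γ}|a_k|)·‖Σ_{k∈Γ} e_k‖. -/
open Finset Filter

/-- A (seminormalized Schauder) basis of a real normed space, given by the basis
vectors `e k` together with the coefficient functionals `coeff k`. -/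
structure QGBasis (X : Type*) [NormedAddCommGroup X] [NormedSpace ℝ X] where
  e : ℕ → X
  coeff : ℕ → X → ℝ
  coeff_add : ∀ k x y, coeff k (x + y) = coeff k x + coeff k y
  coeff_smul : ∀ (k : ℕ) (c : ℝ) (x : X), coeff k (c • x) = c * coeff k x
  coeff_e : ∀ j k, coeff j (e k) = if j = k then 1 else 0
  expansion : ∀ x : X,
    Tendsto (fun N => ∑ k ∈ Finset.range N, coeff k x • e k) atTop (nhds x)
  c_norm : ℝ
  C_norm : ℝ
  c_norm_pos : 0 < c_norm
  norm_e_ge : ∀ k, c_norm ≤ ‖e k‖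
  norm_e_le : ∀ k, ‖e k‖ ≤ C_norm

namespace QGBasis

variable {X : Type*} [NormedAddCommGroup X] [NormedSpace ℝ X] (B : QGBasis X)

/-- `π` enumerates the coefficients of `x` in decreasing order of modulus;
position `k` (zero-based) carries the `(k+1)`-st largest coefficient. -/
def IsGreedyPerm (x : X) (π : ℕ → ℕ) : Prop :=
  Function.Bijective π ∧ ∀ k, |B.coeff (π (k + 1)) x| ≤ |B.coeff (π k) x|

/-- The thresholding greedy approximation of order `N` associated to the
greedy enumeration `π`. -/
def G (π : ℕ → ℕ) (N : ℕ) (x : X) : X :=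
  ∑ k ∈ Finset.range N, B.coeff (π k) x • B.e (π k)

/-- `B` is quasi-greedy with constant `K`. -/
def QuasiGreedyWith (K : ℝ) : Prop :=
  ∀ (x : X) (π : ℕ → ℕ), B.IsGreedyPerm x π → ∀ N,
    ‖B.G π N x‖ ≤ K * ‖x‖ ∧ ‖x - B.G π N x‖ ≤ K * ‖x‖

/-- Coordinate projection onto the index set `Γ`. -/
def S (Γ : Finset ℕ) (x : X) : X := ∑ k ∈ Γ, B.coeff k x • B.e k

/-- Right democracy function. -/
noncomputable def hr (N : ℕ) : ℝ :=
  sSup {r | ∃ Γ : Finset ℕ, Γ.card = N ∧ r = ‖∑ k ∈ Γ, B.e k‖}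

/-- Left democracy function. -/
noncomputable def hl (N : ℕ) : ℝ :=
  sInf {r | ∃ Γ : Finset ℕ, Γ.card = N ∧ r = ‖∑ k ∈ Γ, B.e k‖}

/-- The democracy ratio `μ(N) = sup_{1 ≤ k ≤ N} h_r(k)/h_l(k)`. -/
noncomputable def mu (N : ℕ) : ℝ :=
  sSup {r | ∃ k, 1 ≤ k ∧ k ≤ N ∧ r = B.hr k / B.hl k}

/-- Best `N`-term approximation error. -/
noncomputable def sigma (N : ℕ) (x : X) : ℝ :=
  sInf {r | ∃ (Γ : Finset ℕ) (b : ℕ → ℝ),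
    Γ.card ≤ N ∧ r = ‖x - ∑ k ∈ Γ, b k • B.e k‖}

/-- `Γ` is a greedy set for `x`: every coefficient inside dominates every
coefficient outside. -/
def IsGreedySet (x : X) (Γ : Finset ℕ) : Prop :=
  ∀ j ∈ Γ, ∀ i ∉ Γ, |B.coeff i x| ≤ |B.coeff j x|

end QGBasis

/-! The greedy sums of a finitely supported vector are exactly its coordinate projections onto
sets of largest coefficients, so quasi-greediness bounds these projections by `K ‖x‖`.
For sign vectors `η, ε` on `Γ`, writing `∑ η_k e_k = S_A x - (x - S_A x)` with
`x = ∑ ε_k e_k` and `A` the set where `η` and `ε` agree gives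
`‖∑ η_k e_k‖ ≤ 2K ‖∑ ε_k e_k‖`; the upper estimate follows by convexity, since the cube
`[-1, 1]^Γ` is the convex hull of the sign vectors. For the lower estimate,
`min |a| • ∑ sgn(a_k) e_k` is an Abel sum of the greedy sums of `∑ a_k e_k` with increasing
weights `min |a| / |a_k| ≤ 1`, hence has norm at most `2K ‖∑ a_k e_k‖`. -/

theorem List.Nodup.exists_bijective_extension {l : List ℕ} (hl : l.Nodup) :
    ∃ π : ℕ → ℕ, Function.Bijective π ∧ (∀ i (hi : i < l.length), π i = l[i]) ∧
      ∀ i, l.length ≤ i → π i ∉ l := by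
  classical
  set p : ℕ → Prop := (· ∉ l)
  have hp : {y | p y}.Infinite := by
    simpa [p, Set.compl_def] using l.toFinset.finite_toSet.infinite_compl
  let π : ℕ → ℕ := fun i => if h : i < l.length then l[i] else Nat.nth p (i - l.length)
  have hπ_lt : ∀ i (hi : i < l.length), π i = l[i] := fun i hi => dif_pos hi
  have hπ_ge : ∀ i, l.length ≤ i → π i = Nat.nth p (i - l.length) :=
    fun i hi => dif_neg (Nat.not_lt.2 hi)
  have hπ_out : ∀ i, l.length ≤ i → π i ∉ l :=
    fun i hi => hπ_ge i hi ▸ Nat.nth_mem_of_infinite hp _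
  refine ⟨π, ⟨fun i j hij => ?_, fun y => ?_⟩, hπ_lt, hπ_out⟩
  · rcases lt_or_ge i l.length with hi | hi <;> rcases lt_or_ge j l.length with hj | hj
    · rw [hπ_lt i hi, hπ_lt j hj] at hij
      exact (hl.getElem_inj_iff).1 hij
    · exact absurd (hij ▸ hπ_lt i hi ▸ List.getElem_mem hi) (hπ_out j hj)
    · exact absurd (hij ▸ hπ_lt j hj ▸ List.getElem_mem hj) (hπ_out i hi)
    · rw [hπ_ge i hi, hπ_ge j hj] at hij
      have := Nat.nth_injective hp hij
      omega
  · by_cases hy : y ∈ l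
    · obtain ⟨i, hi, rfl⟩ := List.mem_iff_getElem.1 hy
      exact ⟨i, hπ_lt i hi⟩
    · refine ⟨l.length + Nat.count p y, ?_⟩
      rw [hπ_ge _ (Nat.le_add_right _ _), Nat.add_sub_cancel_left]
      exact Nat.nth_count hy

theorem Finset.exists_nodup_list_pairwise_ge {α : Type*} (s : Finset α) (f : α → ℝ) :
    ∃ l : List α, l.Nodup ∧ (∀ i, i ∈ l ↔ i ∈ s) ∧ l.Pairwise (fun i j => f j ≤ f i) := by
  classical
  let r : α → α → Prop := fun i j => f j ≤ f i
  have : Std.Total r := ⟨fun i j => le_total (f j) (f i)⟩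
  have : IsTrans α r := ⟨fun _ _ _ h₁ h₂ => h₂.trans h₁⟩
  have hperm := List.perm_insertionSort r s.toList
  exact ⟨_, hperm.nodup_iff.2 s.nodup_toList, fun i => by rw [hperm.mem_iff, mem_toList],
    List.pairwise_insertionSort r _⟩

theorem Convex.mem_of_forall_abs_eq_one {ι : Type*} {s : Set (ι → ℝ)} (hs : Convex ℝ s)
    (Δ : Finset ι) {b : ι → ℝ} (hb : ∀ k ∈ Δ, |b k| ≤ 1)
    (h : ∀ η : ι → ℝ, (∀ k ∈ Δ, |η k| = 1) → (∀ k ∉ Δ, η k = b k) → η ∈ s) : b ∈ s := by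
  classical
  induction Δ using Finset.induction_on generalizing b with
  | empty => exact h b (by simp) fun _ _ => rfl
  | insert j Δ hj ih =>
    have hvertex : ∀ σ : ℝ, |σ| = 1 → Function.update b j σ ∈ s := by
      intro σ hσ
      refine ih (fun k hk => ?_) fun η hη hηb => h η (fun k hk => ?_) fun k hk => ?_
      · rw [Function.update_of_ne (ne_of_mem_of_not_mem hk hj)]
        exact hb k (mem_insert_of_mem hk)
      · rcases mem_insert.1 hk with rfl | hk
        · by_cases hkΔ : k ∈ Δ
          · exact hη k hkΔ
          · rw [hηb k hkΔ, Function.update_self, hσ]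
        · exact hη k hk
      · rw [hηb k fun hkΔ => hk (mem_insert_of_mem hkΔ),
          Function.update_of_ne fun hkj => hk (mem_insert.2 (Or.inl hkj))]
    -- `b` lies on the segment between the two vertices obtained by setting `b j` to `±1`.
    have hbj := abs_le.1 (hb j (mem_insert_self j Δ))
    convert hs (hvertex 1 (by simp)) (hvertex (-1) (by simp)) (a := (1 + b j) / 2)
      (b := (1 - b j) / 2) (by linarith) (by linarith) (by ring) using 1
    ext k
    by_cases hk : k = j
    · subst hk
      simp only [Pi.add_apply, Pi.smul_apply, Function.update_self, smul_eq_mul]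
      ring
    · simp only [Pi.add_apply, Pi.smul_apply, Function.update_of_ne hk, smul_eq_mul]
      ring

theorem norm_sum_range_smul_le_two_mul {E : Type*} [SeminormedAddCommGroup E] [NormedSpace ℝ E]
    {c : ℕ → ℝ} {g : ℕ → E} {n : ℕ} {C : ℝ} (hc : MonotoneOn c (Set.Iio n)) (hc₀ : 0 ≤ c 0)
    (hc₁ : ∀ i < n, c i ≤ 1) (hg : ∀ k ≤ n, ‖∑ i ∈ range k, g i‖ ≤ C) :
    ‖∑ i ∈ range n, c i • g i‖ ≤ 2 * C := by
  have hC : 0 ≤ C := by simpa using hg 0 (Nat.zero_le n)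
  rcases n with _ | n
  · simpa using hC
  have hstep : ∀ i ∈ range n, 0 ≤ c (i + 1) - c i := fun i hi =>
    sub_nonneg.2 <| hc (Set.mem_Iio.2 (by simp at hi; omega)) (Set.mem_Iio.2 (by simp at hi; omega))
      (Nat.le_succ i)
  rw [sum_range_by_parts, Nat.add_sub_cancel]
  calc _ ≤ ‖c n • ∑ i ∈ range (n + 1), g i‖ +
        ∑ i ∈ range n, ‖(c (i + 1) - c i) • ∑ j ∈ range (i + 1), g j‖ :=
        (norm_sub_le _ _).trans (add_le_add le_rfl (norm_sum_le _ _))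
    _ ≤ c n * C + ∑ i ∈ range n, (c (i + 1) - c i) * C := by
        have hcn : 0 ≤ c n := hc₀.trans (hc (by simp) (by simp) (Nat.zero_le n))
        gcongr with i hi
        · rw [norm_smul, Real.norm_of_nonneg hcn]
          exact mul_le_mul_of_nonneg_left (hg _ le_rfl) hcn
        · rw [norm_smul, Real.norm_of_nonneg (hstep i hi)]
          exact mul_le_mul_of_nonneg_left (hg _ (by simp at hi; omega)) (hstep i hi)
    _ = (2 * c n - c 0) * C := by rw [← sum_mul, sum_range_sub]; ring
    _ ≤ 2 * C := by nlinarith [hc₁ n (Nat.lt_succ_self n)]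

namespace QGBasis

variable {X : Type*} [NormedAddCommGroup X] [NormedSpace ℝ X] (B : QGBasis X)

def coeffₗ (k : ℕ) : X →ₗ[ℝ] ℝ where
  toFun := B.coeff k
  map_add' := B.coeff_add k
  map_smul' := B.coeff_smul k

theorem coeff_sum_smul_e (Γ : Finset ℕ) (a : ℕ → ℝ) (j : ℕ) :
    B.coeff j (∑ k ∈ Γ, a k • B.e k) = if j ∈ Γ then a j else 0 := by
  change B.coeffₗ j _ = _
  simp [map_sum, coeffₗ, B.coeff_e]

theorem exists_isGreedyPerm {x : X} {Γ A : Finset ℕ} (hx : ∀ i ∉ Γ, B.coeff i x = 0)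
    (hA : B.IsGreedySet x A) : ∃ π, B.IsGreedyPerm x π ∧ (range #A).image π = A := by
  classical
  obtain ⟨l₁, hl₁, hmem₁, hsort₁⟩ := A.exists_nodup_list_pairwise_ge fun i => |B.coeff i x|
  obtain ⟨l₂, hl₂, hmem₂, hsort₂⟩ := (Γ \ A).exists_nodup_list_pairwise_ge fun i => |B.coeff i x|
  have hl := hl₁.append hl₂ fun i hi₁ hi₂ => (mem_sdiff.1 ((hmem₂ i).1 hi₂)).2 ((hmem₁ i).1 hi₁)
  have hsort := List.pairwise_append.2 ⟨hsort₁, hsort₂, fun j hj i hi =>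
    hA j ((hmem₁ j).1 hj) i (mem_sdiff.1 ((hmem₂ i).1 hi)).2⟩
  have hlen : l₁.length = #A := by
    rw [← List.toFinset_card_of_nodup hl₁]
    congr 1
    ext i
    simp [hmem₁]
  obtain ⟨π, hπ, hπl, hπout⟩ := hl.exists_bijective_extension
  refine ⟨π, ⟨hπ, fun k => ?_⟩, ?_⟩
  · by_cases hk : k + 1 < (l₁ ++ l₂).length
    · rw [hπl _ hk, hπl k (by omega)]
      exact List.pairwise_iff_getElem.1 hsort k (k + 1) _ _ (Nat.lt_succ_self k)
    · -- past the end of `l₁ ++ l₂` only indices outside `Γ`, with coefficient `0`, remain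
      have hout : π (k + 1) ∉ Γ := fun hΓ => hπout (k + 1) (by omega) <| by
        by_cases hA' : π (k + 1) ∈ A
        · exact List.mem_append_left _ ((hmem₁ _).2 hA')
        · exact List.mem_append_right _ ((hmem₂ _).2 (mem_sdiff.2 ⟨hΓ, hA'⟩))
      rw [hx _ hout, abs_zero]
      exact abs_nonneg _
  · ext y
    simp only [mem_image, mem_range]
    constructor
    · rintro ⟨i, hi, rfl⟩
      rw [hπl i (by simp; omega), List.getElem_append_left (by omega)]
      exact (hmem₁ _).1 (List.getElem_mem _)
    · intro hy
      obtain ⟨i, hi, rfl⟩ := List.mem_iff_getElem.1 ((hmem₁ y).2 hy)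
      exact ⟨i, hlen ▸ hi, by rw [hπl i (by simp; omega), List.getElem_append_left hi]⟩

namespace QuasiGreedyWith

variable {B} {K : ℝ} (hK : B.QuasiGreedyWith K)
include hK

theorem norm_S_le_and_norm_sub_S_le {x : X} {Γ A : Finset ℕ} (hx : ∀ i ∉ Γ, B.coeff i x = 0)
    (hA : B.IsGreedySet x A) : ‖B.S A x‖ ≤ K * ‖x‖ ∧ ‖x - B.S A x‖ ≤ K * ‖x‖ := by
  classical
  obtain ⟨π, hπ, himage⟩ := B.exists_isGreedyPerm hx hA
  have hG : B.G π #A x = B.S A x := by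
    rw [QGBasis.S]
    conv_rhs => rw [← himage]
    rw [sum_image hπ.1.1.injOn]
    rfl
  simpa [hG] using hK x π hπ #A

theorem one_le : 1 ≤ K := by
  have hx : ∀ i ∉ ({0} : Finset ℕ), B.coeff i (B.e 0) = 0 := fun i hi => by
    simp_all [B.coeff_e]
  obtain ⟨π, hπ, -⟩ := B.exists_isGreedyPerm hx (A := ∅) (by simp [IsGreedySet])
  have h := (hK _ π hπ 0).2
  simp only [QGBasis.G, range_zero, sum_empty, sub_zero] at h
  exact (le_mul_iff_one_le_left (B.c_norm_pos.trans_le (B.norm_e_ge 0))).1 h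

theorem norm_sum_sign_le {Γ : Finset ℕ} {ε η : ℕ → ℝ} (hε : ∀ k ∈ Γ, |ε k| = 1)
    (hη : ∀ k ∈ Γ, |η k| = 1) :
    ‖∑ k ∈ Γ, η k • B.e k‖ ≤ 2 * K * ‖∑ k ∈ Γ, ε k • B.e k‖ := by
  classical
  set x := ∑ k ∈ Γ, ε k • B.e k
  set A := Γ.filter fun k => η k = ε k
  have hcoeff := B.coeff_sum_smul_e Γ ε
  have hgreedy : B.IsGreedySet x A := by
    intro j hj i _
    rw [hcoeff, hcoeff, if_pos (filter_subset _ _ hj), hε j (filter_subset _ _ hj)]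
    split_ifs with hi
    exacts [(hε i hi).le, by simp]
  have hS : B.S A x = ∑ k ∈ A, ε k • B.e k :=
    sum_congr rfl fun k hk => by rw [hcoeff, if_pos (filter_subset _ _ hk)]
  have hsplit : ∑ k ∈ Γ, η k • B.e k = B.S A x - (x - B.S A x) := by
    have hflip : ∀ k ∈ Γ.filter (fun k => ¬η k = ε k), η k • B.e k = -(ε k • B.e k) := by
      intro k hk
      obtain ⟨hkΓ, hne⟩ := mem_filter.1 hk
      rcases abs_eq_abs.1 ((hη k hkΓ).trans (hε k hkΓ).symm) with h | h
      · exact absurd h hne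
      · rw [h, neg_smul]
    have hx : x = ∑ k ∈ A, ε k • B.e k + ∑ k ∈ Γ.filter (fun k => ¬η k = ε k), ε k • B.e k :=
      (sum_filter_add_sum_filter_not Γ _ _).symm
    rw [← sum_filter_add_sum_filter_not Γ fun k => η k = ε k, sum_congr rfl hflip,
      sum_congr rfl fun k hk => by rw [(mem_filter.1 hk).2], sum_neg_distrib, hS, hx]
    abel
  obtain ⟨h₁, h₂⟩ := hK.norm_S_le_and_norm_sub_S_le (fun i hi => by rw [hcoeff, if_neg hi]) hgreedy
  calc ‖∑ k ∈ Γ, η k • B.e k‖ ≤ ‖B.S A x‖ + ‖x - B.S A x‖ := hsplit ▸ norm_sub_le _ _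
    _ ≤ 2 * K * ‖x‖ := by linarith

theorem norm_sum_smul_le_of_abs_le_one {Γ : Finset ℕ} {a : ℕ → ℝ} (ha : ∀ k ∈ Γ, |a k| ≤ 1) :
    ‖∑ k ∈ Γ, a k • B.e k‖ ≤ 2 * K * ‖∑ k ∈ Γ, B.e k‖ := by
  let L : (ℕ → ℝ) →ₗ[ℝ] X := ∑ k ∈ Γ, (LinearMap.proj k).smulRight (B.e k)
  have hconvex : Convex ℝ {b : ℕ → ℝ | ‖∑ k ∈ Γ, b k • B.e k‖ ≤ 2 * K * ‖∑ k ∈ Γ, B.e k‖} := by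
    simpa [L] using
      ((convexOn_norm convex_univ).comp_linearMap L).convex_le (2 * K * ‖∑ k ∈ Γ, B.e k‖)
  refine hconvex.mem_of_forall_abs_eq_one Γ ha fun η hη _ => ?_
  simpa using hK.norm_sum_sign_le (ε := fun _ => 1) (by simp) hη

theorem norm_sum_smul_le {Γ : Finset ℕ} {a : ℕ → ℝ} {M : ℝ} (hM : 0 ≤ M)
    (ha : ∀ k ∈ Γ, |a k| ≤ M) :
    ‖∑ k ∈ Γ, a k • B.e k‖ ≤ 2 * K * M * ‖∑ k ∈ Γ, B.e k‖ := by
  rcases hM.eq_or_lt with rfl | hM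
  · have hzero : ∀ k ∈ Γ, a k • B.e k = 0 := fun k hk => by
      rw [abs_nonpos_iff.1 (ha k hk), zero_smul]
    simp [sum_eq_zero hzero]
  have hsum : ∑ k ∈ Γ, a k • B.e k = M • ∑ k ∈ Γ, (a k / M) • B.e k := by
    rw [smul_sum]
    exact sum_congr rfl fun k _ => by rw [smul_smul, mul_div_cancel₀ _ hM.ne']
  have hunit := hK.norm_sum_smul_le_of_abs_le_one (a := fun k => a k / M) fun k hk => by
    rw [abs_div, abs_of_pos hM, div_le_one hM]
    exact ha k hk
  rw [hsum, norm_smul, Real.norm_of_nonneg hM.le]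
  nlinarith

theorem mul_norm_sum_sign_le {Γ : Finset ℕ} {a : ℕ → ℝ} {m : ℝ} (hm : 0 < m)
    (ha : ∀ k ∈ Γ, m ≤ |a k|) :
    m * ‖∑ k ∈ Γ, (a k / |a k|) • B.e k‖ ≤ 2 * K * ‖∑ k ∈ Γ, a k • B.e k‖ := by
  classical
  set x := ∑ k ∈ Γ, a k • B.e k
  have hcoeff := B.coeff_sum_smul_e Γ a
  obtain ⟨π, hπ, himage⟩ := B.exists_isGreedyPerm (x := x) (A := Γ)
    (fun i hi => by rw [hcoeff, if_neg hi]) fun j hj i hi => by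
      rw [hcoeff, hcoeff, if_neg hi, if_pos hj, abs_zero]
      exact abs_nonneg _
  have hπΓ : ∀ i < #Γ, π i ∈ Γ := fun i hi => himage ▸ mem_image_of_mem π (mem_range.2 hi)
  have hreindex : ∀ f : ℕ → X, ∑ k ∈ Γ, f k = ∑ i ∈ range #Γ, f (π i) := fun f => by
    conv_lhs => rw [← himage]
    exact sum_image hπ.1.1.injOn
  have hanti : Antitone fun i => |B.coeff (π i) x| := antitone_nat_of_succ_le hπ.2
  have hcoeffπ : ∀ i < #Γ, B.coeff (π i) x = a (π i) := fun i hi => by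
    rw [hcoeff, if_pos (hπΓ i hi)]
  have hge : ∀ i < #Γ, m ≤ |B.coeff (π i) x| := fun i hi => hcoeffπ i hi ▸ ha _ (hπΓ i hi)
  -- The weights `c i = m / |a_(π i)|` increase along the greedy order, so Abel summation applies.
  set c : ℕ → ℝ := fun i => m / |B.coeff (π i) x|
  have hsum : m • ∑ k ∈ Γ, (a k / |a k|) • B.e k =
      ∑ i ∈ range #Γ, c i • (B.coeff (π i) x • B.e (π i)) := by
    rw [smul_sum, hreindex]
    refine sum_congr rfl fun i hi => ?_
    rw [hcoeffπ i (mem_range.1 hi), smul_smul, smul_smul]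
    congr 1
    simp only [c, hcoeffπ i (mem_range.1 hi)]
    ring
  have hmono : MonotoneOn c (Set.Iio #Γ) := fun i hi j hj hij =>
    div_le_div_of_nonneg_left hm.le (hm.trans_le (hge j hj)) (hanti hij)
  have hc₀ : 0 ≤ c 0 := div_nonneg hm.le (abs_nonneg _)
  have hc₁ : ∀ i < #Γ, c i ≤ 1 := fun i hi => (div_le_one (hm.trans_le (hge i hi))).2 (hge i hi)
  have habel := norm_sum_range_smul_le_two_mul hmono hc₀ hc₁ fun k _ => (hK x π hπ k).1
  rw [← hsum, norm_smul, Real.norm_of_nonneg hm.le] at habel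
  linarith

theorem mul_norm_sum_le {Γ : Finset ℕ} {a : ℕ → ℝ} {m : ℝ} (hm : 0 ≤ m)
    (ha : ∀ k ∈ Γ, m ≤ |a k|) :
    m * ‖∑ k ∈ Γ, B.e k‖ ≤ 4 * K ^ 2 * ‖∑ k ∈ Γ, a k • B.e k‖ := by
  rcases hm.eq_or_lt with rfl | hm
  · simp only [zero_mul]
    positivity
  have hsign : ∀ k ∈ Γ, |a k / (|a k|)| = 1 := fun k hk => by
    rw [abs_div, abs_abs, div_self (hm.trans_le (ha k hk)).ne']
  have h₁ : ‖∑ k ∈ Γ, B.e k‖ ≤ 2 * K * ‖∑ k ∈ Γ, (a k / |a k|) • B.e k‖ := by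
    simpa using hK.norm_sum_sign_le hsign (η := fun _ => 1) (by simp)
  have h₂ := hK.mul_norm_sum_sign_le hm ha
  have hK₀ : 0 ≤ 2 * K := by linarith [hK.one_le]
  calc m * ‖∑ k ∈ Γ, B.e k‖ ≤ 2 * K * (m * ‖∑ k ∈ Γ, (a k / |a k|) • B.e k‖) := by
        nlinarith
    _ ≤ 2 * K * (2 * K * ‖∑ k ∈ Γ, a k • B.e k‖) := mul_le_mul_of_nonneg_left h₂ hK₀
    _ = 4 * K ^ 2 * ‖∑ k ∈ Γ, a k • B.e k‖ := by ring

end QuasiGreedyWith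

end QGBasis

theorem stmt0_general {X : Type*} [NormedAddCommGroup X] [NormedSpace ℝ X]
    (B : QGBasis X) (K : ℝ) (hK : B.QuasiGreedyWith K)
    (Γ : Finset ℕ) (hΓ : Γ.Nonempty) (a : ℕ → ℝ) :
    (1 / (4 * K ^ 2)) * (Γ.inf' hΓ fun k => |a k|) * ‖∑ k ∈ Γ, B.e k‖ ≤
        ‖∑ k ∈ Γ, a k • B.e k‖ ∧
    ‖∑ k ∈ Γ, a k • B.e k‖ ≤
        2 * K * (Γ.sup' hΓ fun k => |a k|) * ‖∑ k ∈ Γ, B.e k‖ := by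
  constructor
  · have hlower := hK.mul_norm_sum_le (le_inf' hΓ _ fun k _ => abs_nonneg (a k))
      fun k hk => inf'_le (fun k => |a k|) hk
    have hK₂ : 0 < 4 * K ^ 2 := by nlinarith [hK.one_le]
    rw [mul_assoc, one_div_mul_eq_div, div_le_iff₀ hK₂]
    linarith
  · obtain ⟨k₀, hk₀⟩ := hΓ
    exact hK.norm_sum_smul_le ((abs_nonneg (a k₀)).trans (le_sup' (fun k => |a k|) hk₀))
      fun k hk => le_sup' (fun k => |a k|) hk

/-- the DKKT inequalities for quasi-greedy bases. -/
theorem stmt0 {X : Type*} [NormedAddCommGroup X] [NormedSpace ℝ X] [CompleteSpace X]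
    (B : QGBasis X) (K : ℝ) (hK : B.QuasiGreedyWith K)
    (Γ : Finset ℕ) (hΓ : Γ.Nonempty) (a : ℕ → ℝ) :
    (1 / (4 * K ^ 2)) * (Γ.inf' hΓ fun k => |a k|) * ‖∑ k ∈ Γ, B.e k‖ ≤
        ‖∑ k ∈ Γ, a k • B.e k‖ ∧
    ‖∑ k ∈ Γ, a k • B.e k‖ ≤
        2 * K * (Γ.sup' hΓ fun k => |a k|) * ‖∑ k ∈ Γ, B.e k‖ :=
  stmt0_general B K hK Γ hΓ a
end

section
/- Let B = {e_k} be a quasi-greedy basis with quasi-greedy constant K in a real Banach space X. Suppose there exist C₁ > 0 and a function η: ℕ → (0,∞) that is increasing and doubling such that ‖Σ_{k∈Γ} e_k‖ ≤ C₁ η(|Γ|) for all finite Γ ⊂ ℕ. Then there is a constant C_η depending only on η such that for every x = Σ_k a_k(x) e_k ∈ X, ‖x‖ ≤ 2K·C_η·Σ_{k=1}^∞ a_k*(x) η(k)/k, where (a_k*(x)) is the decreasing rearrangement of (|a_k(x)|). -/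
/-!
Approximate `x` by its partial sums `∑_{k<N} a_k e_k`. Listing the coefficients of such a sum in
the greedy order `π`, Abel summation writes it as `∑_j (a*_j - a*_{j+1}) • s_j`, where `s_j` is a
sum of `j + 1` distinct basis vectors with signs; splitting `s_j` into its positive and negative
part gives `‖s_j‖ ≤ 2 C₁ η (j + 1)`. Since `η` is increasing and doubling,
`η (j + 1) ≤ 2 D ∑_{j/2 ≤ k ≤ j} η (k + 1) / (k + 1)`, and exchanging the order of summation
bounds `∑_j (a*_j - a*_{j+1}) η (j + 1)` by `2 D ∑_k a*_k η (k + 1) / (k + 1)`.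
-/

open Finset Filter

section SignedSums

variable {ι X : Type*} [NormedAddCommGroup X] [NormedSpace ℝ X]

lemma norm_sum_sign_smul_le {e : ι → X} {φ : ℕ → ℝ} (hφ : Monotone φ)
    (hup : ∀ Γ : Finset ι, ‖∑ k ∈ Γ, e k‖ ≤ φ #Γ) (s : ι → ℝ) (A : Finset ι) :
    ‖∑ k ∈ A, (SignType.sign (s k) : ℝ) • e k‖ ≤ 2 * φ #A := by
  classical
  have hsplit : ∑ k ∈ A, (SignType.sign (s k) : ℝ) • e k
      = ∑ k ∈ A with 0 < s k, e k - ∑ k ∈ A with s k < 0, e k := by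
    rw [sum_filter, sum_filter, ← sum_sub_distrib]
    refine sum_congr rfl fun k _ => ?_
    rcases lt_trichotomy (s k) 0 with h | h | h
    · simp [h, h.not_gt]
    · simp [h]
    · simp [h, h.not_gt]
  have hpart (p : ι → Prop) [DecidablePred p] : ‖∑ k ∈ A with p k, e k‖ ≤ φ #A :=
    (hup _).trans (hφ (card_filter_le _ _))
  rw [hsplit]
  linarith [norm_sub_le (∑ k ∈ A with 0 < s k, e k) (∑ k ∈ A with s k < 0, e k),
    hpart (0 < s ·), hpart (s · < 0)]

lemma norm_sum_smul_le_of_antitone {c : ℕ → ℝ} (hc : Antitone c) {M : ℕ} (hcM : c M = 0)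
    (w : ℕ → X) :
    ‖∑ j ∈ range M, c j • w j‖ ≤ ∑ j ∈ range M, (c j - c (j + 1)) * ‖∑ m ∈ range (j + 1), w m‖ := by
  have habel : ∑ j ∈ range M, c j • w j
      = ∑ j ∈ range M, (c j - c (j + 1)) • ∑ m ∈ range (j + 1), w m := by
    rcases M with _ | M
    · simp
    rw [sum_range_by_parts, Nat.add_sub_cancel,
      sum_range_succ (fun j => (c j - c (j + 1)) • ∑ m ∈ range (j + 1), w m) M, hcM, sub_zero,
      sub_eq_add_neg, add_comm, ← sum_neg_distrib]
    congr 1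
    refine sum_congr rfl fun j _ => ?_
    rw [← neg_smul, neg_sub]
  rw [habel]
  refine (norm_sum_le _ _).trans (sum_le_sum fun j _ => ?_)
  rw [norm_smul, Real.norm_of_nonneg (sub_nonneg.2 (hc j.le_succ))]

end SignedSums

section Doubling

variable {η : ℕ → ℝ} {D : ℝ}

lemma one_le_of_doubling (hmono : Monotone η) (hpos : ∀ k, 1 ≤ k → 0 < η k)
    (hdbl : ∀ k, 1 ≤ k → η (2 * k) ≤ D * η k) : 1 ≤ D := by
  have h1 := hpos 1 le_rfl
  have h2 : η 1 ≤ D * η 1 := (hmono (by norm_num : 1 ≤ 2 * 1)).trans (hdbl 1 le_rfl)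
  nlinarith

lemma le_two_mul_sum_Icc_div_of_doubling (hmono : Monotone η) (hpos : ∀ k, 1 ≤ k → 0 < η k)
    (hdbl : ∀ k, 1 ≤ k → η (2 * k) ≤ D * η k) (j : ℕ) :
    η (j + 1) ≤ 2 * D * ∑ k ∈ Icc (j / 2) j, η (k + 1) / (k + 1) := by
  have hj := hpos (j + 1) (Nat.le_add_left 1 j)
  have hterm : ∀ k ∈ Icc (j / 2) j, η (j + 1) / (j + 1) ≤ D * (η (k + 1) / (k + 1)) := by
    intro k hk
    rw [mem_Icc] at hk
    have hηk : η (j + 1) ≤ D * η (k + 1) :=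
      (hmono (by omega : j + 1 ≤ 2 * (k + 1))).trans (hdbl (k + 1) (Nat.le_add_left 1 k))
    have hkj : (k : ℝ) + 1 ≤ j + 1 := by exact_mod_cast Nat.succ_le_succ hk.2
    rw [← mul_div_assoc]
    calc η (j + 1) / (j + 1) ≤ D * η (k + 1) / (j + 1) := by gcongr
      _ ≤ D * η (k + 1) / (k + 1) := div_le_div_of_nonneg_left (hj.le.trans hηk) (by positivity) hkj
  have hcard : (j : ℝ) + 1 ≤ 2 * #(Icc (j / 2) j) := by
    rw [Nat.card_Icc]; exact_mod_cast (by omega : j + 1 ≤ 2 * (j + 1 - j / 2))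
  calc η (j + 1) = (j + 1) * (η (j + 1) / (j + 1)) := by field_simp
    _ ≤ 2 * #(Icc (j / 2) j) * (η (j + 1) / (j + 1)) := by gcongr
    _ = 2 * (#(Icc (j / 2) j) • (η (j + 1) / (j + 1))) := by rw [nsmul_eq_mul]; ring
    _ ≤ 2 * ∑ k ∈ Icc (j / 2) j, D * (η (k + 1) / (k + 1)) := by
      gcongr; exact card_nsmul_le_sum _ _ _ hterm
    _ = 2 * D * ∑ k ∈ Icc (j / 2) j, η (k + 1) / (k + 1) := by rw [← mul_sum]; ring

lemma sum_sub_mul_le_of_doubling (hmono : Monotone η) (hpos : ∀ k, 1 ≤ k → 0 < η k)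
    (hdbl : ∀ k, 1 ≤ k → η (2 * k) ≤ D * η k) {c : ℕ → ℝ} (hc : Antitone c)
    (hc0 : ∀ j, 0 ≤ c j) (N : ℕ) :
    ∑ j ∈ range N, (c j - c (j + 1)) * η (j + 1)
      ≤ 2 * D * ∑ k ∈ range N, c k * η (k + 1) / (k + 1) := by
  have hD := one_le_of_doubling hmono hpos hdbl
  have hweight (k : ℕ) : 0 ≤ η (k + 1) / (k + 1) :=
    div_nonneg (hpos (k + 1) (Nat.le_add_left 1 k)).le (by positivity)
  calc ∑ j ∈ range N, (c j - c (j + 1)) * η (j + 1)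
      ≤ ∑ j ∈ range N, (c j - c (j + 1)) * (2 * D * ∑ k ∈ Icc (j / 2) j, η (k + 1) / (k + 1)) :=
        sum_le_sum fun j _ => mul_le_mul_of_nonneg_left
          (le_two_mul_sum_Icc_div_of_doubling hmono hpos hdbl j) (sub_nonneg.2 (hc j.le_succ))
    _ = 2 * D * ∑ j ∈ range N, ∑ k ∈ Icc (j / 2) j, (c j - c (j + 1)) * (η (k + 1) / (k + 1)) := by
        simp only [mul_sum]; exact sum_congr rfl fun j _ => sum_congr rfl fun k _ => by ring
    _ = 2 * D * ∑ k ∈ range N, ∑ j ∈ Ico k (min (2 * k + 2) N),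
          (c j - c (j + 1)) * (η (k + 1) / (k + 1)) := by
        congr 1
        refine sum_comm' fun j k => ?_
        simp only [mem_range, mem_Icc, mem_Ico]
        omega
    _ = 2 * D * ∑ k ∈ range N, (c k - c (min (2 * k + 2) N)) * (η (k + 1) / (k + 1)) := by
        congr 1
        refine sum_congr rfl fun k hk => ?_
        rw [mem_range] at hk
        rw [← sum_mul, ← neg_sub, ← sum_Ico_sub (f := c) (by omega), ← sum_neg_distrib]
        simp only [neg_sub]
    _ ≤ 2 * D * ∑ k ∈ range N, c k * η (k + 1) / (k + 1) := by
        gcongr with k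
        rw [mul_div_assoc]
        exact mul_le_mul_of_nonneg_right (by linarith [hc0 (min (2 * k + 2) N)]) (hweight k)

end Doubling

lemma norm_sum_smul_sign_le_of_doubling {X : Type*} [NormedAddCommGroup X] [NormedSpace ℝ X]
    {e : ℕ → X} {η : ℕ → ℝ} {D C₁ : ℝ} (hmono : Monotone η) (hpos : ∀ k, 1 ≤ k → 0 < η k)
    (hdbl : ∀ k, 1 ≤ k → η (2 * k) ≤ D * η k) (hC₁ : 0 ≤ C₁)
    (hup : ∀ Γ : Finset ℕ, ‖∑ k ∈ Γ, e k‖ ≤ C₁ * η #Γ) {π : ℕ → ℕ} (hπ : Function.Injective π)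
    (s : ℕ → ℝ) {c : ℕ → ℝ} (hc : Antitone c) (hc0 : ∀ j, 0 ≤ c j) {M : ℕ} (hcM : c M = 0) :
    ‖∑ j ∈ range M, c j • (SignType.sign (s (π j)) : ℝ) • e (π j)‖
      ≤ 2 * C₁ * (2 * D * ∑ j ∈ range M, c j * η (j + 1) / (j + 1)) := by
  have hpartial (n : ℕ) :
      ‖∑ m ∈ range n, (SignType.sign (s (π m)) : ℝ) • e (π m)‖ ≤ 2 * (C₁ * η n) := by
    have h := norm_sum_sign_smul_le (φ := fun n => C₁ * η n) (hmono.const_mul hC₁) hup s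
      ((range n).image π)
    rwa [sum_image fun _ _ _ _ h => hπ h, card_image_of_injective _ hπ, card_range] at h
  calc _ ≤ ∑ j ∈ range M, (c j - c (j + 1)) *
          ‖∑ m ∈ range (j + 1), (SignType.sign (s (π m)) : ℝ) • e (π m)‖ :=
        norm_sum_smul_le_of_antitone hc hcM _
    _ ≤ ∑ j ∈ range M, (c j - c (j + 1)) * (2 * (C₁ * η (j + 1))) :=
        sum_le_sum fun j _ => mul_le_mul_of_nonneg_left (hpartial _) (sub_nonneg.2 (hc j.le_succ))
    _ = 2 * C₁ * ∑ j ∈ range M, (c j - c (j + 1)) * η (j + 1) := by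
        rw [mul_sum]; exact sum_congr rfl fun j _ => by ring
    _ ≤ _ := by gcongr; exact sum_sub_mul_le_of_doubling hmono hpos hdbl hc hc0 M

namespace QGBasis

variable {X : Type*} [NormedAddCommGroup X] [NormedSpace ℝ X] (B : QGBasis X)

lemma one_le_of_quasiGreedyWith {K : ℝ} (hK : B.QuasiGreedyWith K) : 1 ≤ K := by
  have hgreedy : B.IsGreedyPerm (B.e 0) id :=
    ⟨Function.bijective_id, fun k => by simp [B.coeff_e]⟩
  have h := (hK (B.e 0) id hgreedy 0).2
  have hpos : 0 < ‖B.e 0‖ := B.c_norm_pos.trans_le (B.norm_e_ge 0)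
  simp only [G, range_zero, sum_empty, sub_zero] at h
  nlinarith

lemma norm_sum_range_coeff_smul_le {η : ℕ → ℝ} {D C₁ : ℝ} (hmono : Monotone η)
    (hpos : ∀ k, 1 ≤ k → 0 < η k) (hdbl : ∀ k, 1 ≤ k → η (2 * k) ≤ D * η k) (hC₁ : 0 ≤ C₁)
    (hup : ∀ Γ : Finset ℕ, ‖∑ k ∈ Γ, B.e k‖ ≤ C₁ * η #Γ) {x : X} {π : ℕ → ℕ}
    (hπ : B.IsGreedyPerm x π) (N : ℕ) :
    ∃ M, ‖∑ k ∈ range N, B.coeff k x • B.e k‖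
      ≤ 2 * C₁ * (2 * D * ∑ j ∈ range M, |B.coeff (π j) x| * η (j + 1) / (j + 1)) := by
  obtain ⟨M, hM⟩ : ∃ M, range N ⊆ (range M).image π := by
    choose g hg using hπ.1.2
    exact ⟨(range N).sup g + 1, fun k hk =>
      mem_image.2 ⟨g k, mem_range.2 (Nat.lt_succ_of_le (le_sup hk)), hg k⟩⟩
  refine ⟨M, ?_⟩
  -- truncating the rearrangement at `M` kills the boundary term of the Abel summation
  set b : ℕ → ℝ := fun k => if k < N then B.coeff k x else 0
  set c : ℕ → ℝ := fun j => if j < M then |B.coeff (π j) x| else 0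
  have hanti : Antitone fun j => |B.coeff (π j) x| := antitone_nat_of_succ_le hπ.2
  have hc : Antitone c := by
    intro i j hij
    simp only [c]
    split_ifs with hj hi hi
    · exact hanti hij
    · omega
    · exact abs_nonneg _
    · exact le_rfl
  have hrepr : ∑ k ∈ range N, B.coeff k x • B.e k
      = ∑ j ∈ range M, c j • (SignType.sign (b (π j)) : ℝ) • B.e (π j) := by
    calc _ = ∑ k ∈ range N, b k • B.e k :=
          sum_congr rfl fun k hk => by simp [b, mem_range.1 hk]
      _ = ∑ k ∈ (range M).image π, b k • B.e k :=
          sum_subset hM fun k _ hk => by simp [b, mem_range.not.1 hk]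
      _ = ∑ j ∈ range M, b (π j) • B.e (π j) := sum_image fun _ _ _ _ h => hπ.1.1 h
      _ = _ := sum_congr rfl fun j hj => by
          simp only [c, b, if_pos (mem_range.1 hj), smul_smul]
          split_ifs <;> simp
  have hcM : ∑ j ∈ range M, c j * η (j + 1) / (j + 1)
      = ∑ j ∈ range M, |B.coeff (π j) x| * η (j + 1) / (j + 1) :=
    sum_congr rfl fun j hj => by simp [c, mem_range.1 hj]
  rw [hrepr, ← hcM]
  exact norm_sum_smul_sign_le_of_doubling hmono hpos hdbl hC₁ hup hπ.1.1 b hc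
    (fun j => by simp only [c]; split_ifs <;> simp) (by simp [c])

end QGBasis

theorem stmt1_general {X : Type*} [NormedAddCommGroup X] [NormedSpace ℝ X]
    (B : QGBasis X) (K : ℝ) (hK : B.QuasiGreedyWith K)
    (η : ℕ → ℝ) (hηpos : ∀ k, 1 ≤ k → 0 < η k) (hηmono : Monotone η)
    (D : ℝ) (hηdbl : ∀ k, 1 ≤ k → η (2 * k) ≤ D * η k)
    (C₁ : ℝ) (hC₁ : 0 < C₁)
    (hup : ∀ Γ : Finset ℕ, ‖∑ k ∈ Γ, B.e k‖ ≤ C₁ * η Γ.card) :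
    ∃ C : ℝ, 0 < C ∧ ∀ (x : X) (π : ℕ → ℕ), B.IsGreedyPerm x π →
      ENNReal.ofReal ‖x‖ ≤ ENNReal.ofReal (2 * K * C) *
        ∑' k : ℕ, ENNReal.ofReal (|B.coeff (π k) x| * η (k + 1) / (k + 1)) := by
  have hK1 := B.one_le_of_quasiGreedyWith hK
  have hD1 := one_le_of_doubling hηmono hηpos hηdbl
  refine ⟨2 * C₁ * D, by positivity, fun x π hπ => ?_⟩
  have hterm (k : ℕ) : 0 ≤ |B.coeff (π k) x| * η (k + 1) / (k + 1) :=
    div_nonneg (mul_nonneg (abs_nonneg _) (hηpos _ (Nat.le_add_left 1 k)).le) (by positivity)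
  have hpartial (N : ℕ) : ENNReal.ofReal ‖∑ k ∈ range N, B.coeff k x • B.e k‖
      ≤ ENNReal.ofReal (2 * K * (2 * C₁ * D)) *
        ∑' k : ℕ, ENNReal.ofReal (|B.coeff (π k) x| * η (k + 1) / (k + 1)) := by
    obtain ⟨M, hM⟩ := B.norm_sum_range_coeff_smul_le hηmono hηpos hηdbl hC₁.le hup hπ N
    have hscale := mul_le_mul_of_nonneg_right hK1 (mul_nonneg (mul_nonneg hC₁.le
      (zero_le_one.trans hD1)) (sum_nonneg fun k (_ : k ∈ range M) => hterm k))
    calc _ ≤ ENNReal.ofReal (2 * K * (2 * C₁ * D) *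
          ∑ k ∈ range M, |B.coeff (π k) x| * η (k + 1) / (k + 1)) :=
          ENNReal.ofReal_le_ofReal (hM.trans (by linarith))
      _ = ENNReal.ofReal (2 * K * (2 * C₁ * D)) *
          ∑ k ∈ range M, ENNReal.ofReal (|B.coeff (π k) x| * η (k + 1) / (k + 1)) := by
          rw [ENNReal.ofReal_mul (by positivity), ENNReal.ofReal_sum_of_nonneg fun k _ => hterm k]
      _ ≤ _ := by gcongr; exact ENNReal.sum_le_tsum _
  exact le_of_tendsto' ((ENNReal.continuous_ofReal.tendsto _).comp (B.expansion x).norm) hpartial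

/-- upper estimate of the norm by the decreasing rearrangement
(Lemma 2.1).  The right-hand side is interpreted in `ℝ≥0∞` so that the
inequality makes sense also when the series diverges.  Position `k` of the
greedy enumeration `π` carries the `(k+1)`-st largest coefficient. -/
theorem stmt1 {X : Type*} [NormedAddCommGroup X] [NormedSpace ℝ X] [CompleteSpace X]
    (B : QGBasis X) (K : ℝ) (hK : B.QuasiGreedyWith K)
    (η : ℕ → ℝ) (hηpos : ∀ k, 1 ≤ k → 0 < η k) (hηmono : Monotone η)
    (D : ℝ) (hηdbl : ∀ k, 1 ≤ k → η (2 * k) ≤ D * η k)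
    (C₁ : ℝ) (hC₁ : 0 < C₁)
    (hup : ∀ Γ : Finset ℕ, ‖∑ k ∈ Γ, B.e k‖ ≤ C₁ * η Γ.card) :
    ∃ C : ℝ, 0 < C ∧ ∀ (x : X) (π : ℕ → ℕ), B.IsGreedyPerm x π →
      ENNReal.ofReal ‖x‖ ≤ ENNReal.ofReal (2 * K * C) *
        ∑' k : ℕ, ENNReal.ofReal (|B.coeff (π k) x| * η (k + 1) / (k + 1)) :=
  stmt1_general B K hK η hηpos hηmono D hηdbl C₁ hC₁ hup
end
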